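/- Let X and Z be Banach spaces, let F = (F_i) be a bimonotone FDD of Z, and let Q : Z -> X be a quotient map (bounded linear surjection). Suppose (x_i) is a weakly null sequence in the unit sphere S_X and Q(C B_Z) contains B_X for some C > 0, where B_Z, B_X are the closed unit balls. Then for every epsilon > 0 and every n in N there exist N in N and z in 2C B_Z such that P^F_{[1,n]} z = 0 and ||Qz - x_N|| < epsilon. -/

import Mathlib

open Filter Topology Set

noncomputable section

/-- A bundled (real) Banach space. -/
structure BanachSp : Type 1 where
  carrier : Type
  [nacg : NormedAddCommGroup carrier]
  [nsp : NormedSpace ℝ carrier]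
  [complete : CompleteSpace carrier]

attribute [instance] BanachSp.nacg BanachSp.nsp BanachSp.complete

instance : CoeSort BanachSp Type := ⟨BanachSp.carrier⟩

section Seqs

variable {V : Type*} [NormedAddCommGroup V] [NormedSpace ℝ V]
variable {W : Type*} [NormedAddCommGroup W] [NormedSpace ℝ W]
variable {X : Type*} [NormedAddCommGroup X] [NormedSpace ℝ X]

/-- `DomBy u x C` : the sequence `(u i)` `C`-dominates the sequence `(x i)`, i.e.
`‖∑ a i • x i‖ ≤ C * ‖∑ a i • u i‖` for all finitely supported scalars. -/
def DomBy (u : ℕ → V) (x : ℕ → X) (C : ℝ) : Prop :=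
  ∀ (a : ℕ → ℝ) (n : ℕ),
    ‖∑ i ∈ Finset.range n, a i • x i‖ ≤ C * ‖∑ i ∈ Finset.range n, a i • u i‖

def IsNormalized (v : ℕ → V) : Prop := ∀ i, ‖v i‖ = 1

/-- A basic sequence: nonzero vectors with uniformly bounded partial sum projections. -/
def IsBasicSeq (v : ℕ → V) : Prop :=
  (∀ i, v i ≠ 0) ∧ ∃ K : ℝ, 1 ≤ K ∧ ∀ (a : ℕ → ℝ) (m n : ℕ), m ≤ n →
    ‖∑ i ∈ Finset.range m, a i • v i‖ ≤ K * ‖∑ i ∈ Finset.range n, a i • v i‖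

/-- `1`-unconditionality : changing signs of coefficients does not change the norm. -/
def IsOneUnconditional (v : ℕ → V) : Prop :=
  ∀ (a ε : ℕ → ℝ), (∀ i, ε i = 1 ∨ ε i = -1) → ∀ n : ℕ,
    ‖∑ i ∈ Finset.range n, (ε i * a i) • v i‖ = ‖∑ i ∈ Finset.range n, a i • v i‖

/-- Bimonotonicity of a basic sequence: interval projections have norm at most one. -/
def IsBimonotoneSeq (v : ℕ → V) : Prop :=
  ∀ (a : ℕ → ℝ) (p q n : ℕ), q ≤ n →
    ‖∑ i ∈ Finset.Ico p q, a i • v i‖ ≤ ‖∑ i ∈ Finset.range n, a i • v i‖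

/-- `(v i)` is `D`-right-dominant : if `m i ≤ n i` for all `i` then `(v (m i))` is
`D`-dominated by `(v (n i))`. -/
def RightDominantC (v : ℕ → V) (D : ℝ) : Prop :=
  ∀ m n : ℕ → ℕ, StrictMono m → StrictMono n → (∀ i, m i ≤ n i) →
    DomBy (fun i => v (n i)) (fun i => v (m i)) D

def RightDominant (v : ℕ → V) : Prop := ∃ D : ℝ, 1 ≤ D ∧ RightDominantC v D

/-- `(v i)` is `D`-left-dominant : if `m i ≤ n i` for all `i` then `(v (m i))`
`D`-dominates `(v (n i))`. -/
def LeftDominantC (v : ℕ → V) (D : ℝ) : Prop :=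
  ∀ m n : ℕ → ℕ, StrictMono m → StrictMono n → (∀ i, m i ≤ n i) →
    DomBy (fun i => v (m i)) (fun i => v (n i)) D

/-- `C`-block-stability: any two normalized block bases whose blocks run along the same
successive intervals are `C`-equivalent. -/
def BlockStableC (v : ℕ → V) (C : ℝ) : Prop :=
  ∀ (x y : ℕ → V) (k : ℕ → ℕ), StrictMono k →
    (∀ i, x i ∈ Submodule.span ℝ (v '' Set.Ico (k i) (k (i+1)))) →
    (∀ i, y i ∈ Submodule.span ℝ (v '' Set.Ico (k i) (k (i+1)))) →
    (∀ i, ‖x i‖ = 1) → (∀ i, ‖y i‖ = 1) → DomBy x y C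

def BlockStable (v : ℕ → V) : Prop := ∃ C : ℝ, 1 ≤ C ∧ BlockStableC v C

/-- A basic sequence is shrinking if every functional is small on far tails of its span. -/
def ShrinkingSeq (v : ℕ → V) : Prop :=
  ∀ φ : V →L[ℝ] ℝ, ∀ δ : ℝ, 0 < δ → ∃ m : ℕ, ∀ (a : ℕ → ℝ) (n : ℕ),
    ‖∑ i ∈ Finset.Ico m n, a i • v i‖ ≤ 1 →
    |φ (∑ i ∈ Finset.Ico m n, a i • v i)| ≤ δ

/-- A basic sequence is boundedly complete if series with bounded partial sums converge. -/
def BoundedlyCompleteSeq (v : ℕ → V) : Prop :=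
  ∀ a : ℕ → ℝ, (∃ M : ℝ, ∀ n, ‖∑ i ∈ Finset.range n, a i • v i‖ ≤ M) →
    ∃ s : V, Tendsto (fun n => ∑ i ∈ Finset.range n, a i • v i) atTop (𝓝 s)

/-- `(w i)` represents (isometrically) the sequence of biorthogonal functionals of the
`1`-unconditional basic sequence `(v i)`: the norm of `∑ a i • w i` is the supremum of the
pairings `∑ a i * b i` over `b` with `‖∑ b i • v i‖ ≤ 1`. -/
def IsBiorthDual (v : ℕ → V) (w : ℕ → W) : Prop :=
  ∀ (a : ℕ → ℝ) (n : ℕ),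
    IsLUB {r : ℝ | ∃ b : ℕ → ℝ, ‖∑ i ∈ Finset.range n, b i • v i‖ ≤ 1 ∧
      r = ∑ i ∈ Finset.range n, a i * b i} ‖∑ i ∈ Finset.range n, a i • w i‖

def WeaklyNullSeq (x : ℕ → X) : Prop :=
  ∀ φ : X →L[ℝ] ℝ, Tendsto (fun i => φ (x i)) atTop (𝓝 0)

end Seqs

/-- A finite-dimensional decomposition (FDD) of `Z` : finite-dimensional subspaces `E i`
together with the coordinate projections `P i`, such that every `z` is the sum of its
coordinates, uniquely. -/
structure FDD (Z : Type*) [NormedAddCommGroup Z] [NormedSpace ℝ Z] where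
  E : ℕ → Submodule ℝ Z
  finDim : ∀ n, FiniteDimensional ℝ (E n)
  P : ℕ → Z →L[ℝ] Z
  mem_E : ∀ i z, P i z ∈ E i
  sum_eq : ∀ z : Z, Tendsto (fun n => ∑ i ∈ Finset.range n, P i z) atTop (𝓝 z)
  unique : ∀ (z : Z) (f : ℕ → Z), (∀ i, f i ∈ E i) →
    Tendsto (fun n => ∑ i ∈ Finset.range n, f i) atTop (𝓝 z) → ∀ i, f i = P i z

namespace FDD

variable {Z : Type*} [NormedAddCommGroup Z] [NormedSpace ℝ Z]
variable {V : Type*} [NormedAddCommGroup V] [NormedSpace ℝ V]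
variable {W : Type*} [NormedAddCommGroup W] [NormedSpace ℝ W]

/-- The canonical projection `P^E_s` onto the span of `(E i : i ∈ s)`. -/
def proj (F : FDD Z) (s : Finset ℕ) : Z →L[ℝ] Z := ∑ i ∈ s, F.P i

/-- The support of a vector with respect to the FDD. -/
def supp (F : FDD Z) (z : Z) : Set ℕ := {i | F.P i z ≠ 0}

/-- `min supp_E z`. -/
def minSupp (F : FDD Z) (z : Z) : ℕ := sInf (F.supp z)

/-- A block sequence with respect to an FDD: supports lie in successive intervals. -/
def IsBlockSeq (F : FDD Z) (z : ℕ → Z) : Prop :=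
  ∃ k : ℕ → ℕ, StrictMono k ∧ ∀ i, F.supp (z i) ⊆ Set.Ico (k i) (k (i+1))

/-- Bimonotonicity: all interval projections have norm at most `1`. -/
def Bimonotone (F : FDD Z) : Prop :=
  ∀ (m n : ℕ) (z : Z), ‖F.proj (Finset.Icc m n) z‖ ≤ ‖z‖

/-- `C` is the projection constant: the supremum of norms of interval projections. -/
def IsProjConst (F : FDD Z) (C : ℝ) : Prop :=
  IsLUB {r : ℝ | ∃ (m n : ℕ) (z : Z), ‖z‖ ≤ 1 ∧ r = ‖F.proj (Finset.Icc m n) z‖} C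

/-- The FDD is shrinking: every functional is the norm limit of its finite-dimensional
restrictions, i.e. the biorthogonal functionals form an FDD of the dual. -/
def Shrinking (F : FDD Z) : Prop :=
  ∀ φ : Z →L[ℝ] ℝ,
    Tendsto (fun n => ‖φ - φ.comp (F.proj (Finset.range n))‖) atTop (𝓝 0)

/-- The FDD is boundedly complete. -/
def BoundedlyComplete (F : FDD Z) : Prop :=
  ∀ f : ℕ → Z, (∀ i, f i ∈ F.E i) →
    (∃ M : ℝ, ∀ n, ‖∑ i ∈ Finset.range n, f i‖ ≤ M) →
    ∃ z : Z, Tendsto (fun n => ∑ i ∈ Finset.range n, f i) atTop (𝓝 z)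

/-- `H` is a blocking of `F`. -/
def IsBlockingOf (H F : FDD Z) : Prop :=
  ∃ m : ℕ → ℕ, m 0 = 0 ∧ StrictMono m ∧
    ∀ j, H.E j = ⨆ i ∈ Finset.Ico (m j) (m (j+1)), F.E i

/-- The closed span `Z_m` of the subspaces `E i`, `i ≥ m` (the first `m` coordinates
removed). -/
def tail (F : FDD Z) (m : ℕ) : Set Z :=
  closure (↑(⨆ i ∈ Set.Ici m, F.E i) : Set Z)

/-- Subsequential `C`-`V`-upper block estimates. -/
def UpperBlockC (F : FDD Z) (v : ℕ → V) (C : ℝ) : Prop :=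
  ∀ z : ℕ → Z, F.IsBlockSeq z → (∀ i, ‖z i‖ = 1) →
    DomBy (fun i => v (F.minSupp (z i))) z C

def UpperBlock (F : FDD Z) (v : ℕ → V) : Prop := ∃ C : ℝ, 1 ≤ C ∧ F.UpperBlockC v C

/-- Subsequential `C`-`V`-lower block estimates. -/
def LowerBlockC (F : FDD Z) (v : ℕ → V) (C : ℝ) : Prop :=
  ∀ z : ℕ → Z, F.IsBlockSeq z → (∀ i, ‖z i‖ = 1) →
    DomBy z (fun i => v (F.minSupp (z i))) C

def LowerBlock (F : FDD Z) (v : ℕ → V) : Prop := ∃ C : ℝ, 1 ≤ C ∧ F.LowerBlockC v C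

/-- A functional supported (w.r.t. the biorthogonal FDD `(E i ^*)`) on the finite set `s`. -/
def dualSupported (F : FDD Z) (s : Finset ℕ) (φ : Z →L[ℝ] ℝ) : Prop :=
  ∀ z : Z, φ z = φ (F.proj s z)

/-- A block sequence of the biorthogonal functionals `(E i ^*)`. -/
def IsDualBlockSeq (F : FDD Z) (φ : ℕ → Z →L[ℝ] ℝ) : Prop :=
  ∃ k : ℕ → ℕ, StrictMono k ∧
    ∀ i, F.dualSupported (Finset.Ico (k i) (k (i+1))) (φ i)

/-- `min supp` of a functional w.r.t. `(E i ^*)`. -/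
def dualMinSupp (F : FDD Z) (φ : Z →L[ℝ] ℝ) : ℕ :=
  sInf {j | ∃ z, φ (F.P j z) ≠ 0}

/-- The biorthogonal FDD `(E i ^*)` satisfies subsequential `C`-`V^*`-lower block
estimates in `Z^(*)`. -/
def DualLowerBlockC (F : FDD Z) (w : ℕ → W) (C : ℝ) : Prop :=
  ∀ φ : ℕ → Z →L[ℝ] ℝ, F.IsDualBlockSeq φ → (∀ i, ‖φ i‖ = 1) →
    DomBy φ (fun i => w (F.dualMinSupp (φ i))) C

def DualLowerBlock (F : FDD Z) (w : ℕ → W) : Prop := ∃ C : ℝ, 1 ≤ C ∧ F.DualLowerBlockC w C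

/-- The biorthogonal FDD `(E i ^*)` satisfies subsequential `C`-`V`-upper block
estimates. -/
def DualUpperBlockC (F : FDD Z) (w : ℕ → W) (C : ℝ) : Prop :=
  ∀ φ : ℕ → Z →L[ℝ] ℝ, F.IsDualBlockSeq φ → (∀ i, ‖φ i‖ = 1) →
    DomBy (fun i => w (F.dualMinSupp (φ i))) φ C

/-- A `δ̄`-skipped block sequence w.r.t. the FDD. -/
def IsSkippedBlock (F : FDD Z) (δ : ℕ → ℝ) (y : ℕ → Z) : Prop :=
  (∀ i, ‖y i‖ = 1) ∧ ∃ k : ℕ → ℕ, k 0 = 0 ∧ StrictMono k ∧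
    ∀ i, ‖F.proj (Finset.Ioo (k i) (k (i+1))) (y i) - y i‖ < δ i

end FDD

section Trees

variable {V : Type*} [NormedAddCommGroup V] [NormedSpace ℝ V]
variable {W : Type*} [NormedAddCommGroup W] [NormedSpace ℝ W]

/-- The finite set `{n 0, …, n (2l+1)}`, i.e. the branch node of level `l+1` along the
strictly increasing sequence `n`. -/
def branchSet (n : ℕ → ℕ) (l : ℕ) : Finset ℕ := Finset.image n (Finset.range (2*l+2))

/-- A normalized weakly null even tree in `X` (indexed by finite sets of naturals, which
correspond to finite strictly increasing sequences). -/
def WNEvenTree {X : Type*} [NormedAddCommGroup X] [NormedSpace ℝ X]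
    (x : Finset ℕ → X) : Prop :=
  (∀ s : Finset ℕ, Even s.card → ‖x s‖ = 1) ∧
  ∀ s : Finset ℕ, Odd s.card →
    ∀ φ : X →L[ℝ] ℝ, Tendsto (fun k => φ (x (insert k s))) atTop (𝓝 0)

/-- Subsequential `C`-`V`-upper tree estimates. -/
def UpperTreeC (v : ℕ → V) (X : Type*) [NormedAddCommGroup X] [NormedSpace ℝ X]
    (C : ℝ) : Prop :=
  ∀ x : Finset ℕ → X, WNEvenTree x →
    ∃ n : ℕ → ℕ, StrictMono n ∧
      DomBy (fun l => v (n (2*l))) (fun l => x (branchSet n l)) C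

/-- Subsequential `V`-upper tree estimates. -/
def UpperTree (v : ℕ → V) (X : Type*) [NormedAddCommGroup X] [NormedSpace ℝ X] : Prop :=
  ∃ C : ℝ, 1 ≤ C ∧ UpperTreeC v X C

/-- A normalized `w^*`-null even tree in the dual of `X`. -/
def WStarNullEvenTree {X : Type*} [NormedAddCommGroup X] [NormedSpace ℝ X]
    (f : Finset ℕ → (X →L[ℝ] ℝ)) : Prop :=
  (∀ s : Finset ℕ, Even s.card → ‖f s‖ = 1) ∧
  ∀ s : Finset ℕ, Odd s.card →
    ∀ u : X, Tendsto (fun k => f (insert k s) u) atTop (𝓝 0)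

/-- Subsequential `C`-`V^*`-lower `w^*` tree estimates for the dual of `X`. -/
def LowerWStarTreeC (w : ℕ → W) (X : Type*) [NormedAddCommGroup X] [NormedSpace ℝ X]
    (C : ℝ) : Prop :=
  ∀ f : Finset ℕ → (X →L[ℝ] ℝ), WStarNullEvenTree f →
    ∃ n : ℕ → ℕ, StrictMono n ∧
      DomBy (fun l => f (branchSet n l)) (fun l => w (n (2*l))) C

end Trees

section Maps

variable {X : Type*} [NormedAddCommGroup X] [NormedSpace ℝ X]
variable {Y : Type*} [NormedAddCommGroup Y] [NormedSpace ℝ Y]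

/-- `X` embeds isomorphically into `Y`. -/
def Embeds (X Y : Type*) [NormedAddCommGroup X] [NormedSpace ℝ X]
    [NormedAddCommGroup Y] [NormedSpace ℝ Y] : Prop :=
  ∃ T : X →L[ℝ] Y, ∃ c : ℝ, 0 < c ∧ ∀ x : X, c * ‖x‖ ≤ ‖T x‖

/-- `X` is a quotient of `Z` (there is a bounded linear surjection `Z → X`). -/
def IsQuotientOf (X Z : Type*) [NormedAddCommGroup X] [NormedSpace ℝ X]
    [NormedAddCommGroup Z] [NormedSpace ℝ Z] : Prop :=
  ∃ Q : Z →L[ℝ] X, Function.Surjective Q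

/-- A map between dual spaces is `w^*`-`w^*` continuous. -/
def WStarWStarContinuous {X Z : Type*} [NormedAddCommGroup X] [NormedSpace ℝ X]
    [NormedAddCommGroup Z] [NormedSpace ℝ Z]
    (T : StrongDual ℝ X →L[ℝ] StrongDual ℝ Z) : Prop :=
  Continuous (fun φ : WeakDual ℝ X =>
    StrongDual.toWeakDual (T (WeakDual.toStrongDual φ)))

end Maps

/-!
Lift each `x i` to `z i` with `‖z i‖ ≤ C`. The heads `P_{[1,n]} (z i)` lie in a
finite-dimensional space, so along a subsequence they all stay within `δ` of the first one,
`P_{[1,n]} (z N)`. Since `(x i)` is weakly null, Mazur's lemma gives a convex combination `y` of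
that subsequence with `‖Q y‖ < δ`. Then `z = (I - P_{[1,n]}) (z N - y)` works: bimonotonicity
gives `‖z‖ ≤ ‖z N - y‖ ≤ 2C`, and `Q z - x N = -Q y + Q P_{[1,n]} (y - z N)` is small.
-/

theorem WeaklyNullSeq.comp_strictMono {X : Type*} [NormedAddCommGroup X] [NormedSpace ℝ X]
    {x : ℕ → X} (hx : WeaklyNullSeq x) {φ : ℕ → ℕ} (hφ : StrictMono φ) :
    WeaklyNullSeq (x ∘ φ) :=
  fun f => (hx f).comp hφ.tendsto_atTop

theorem WeaklyNullSeq.zero_mem_closure_convexHull {X : Type*} [NormedAddCommGroup X]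
    [NormedSpace ℝ X] {x : ℕ → X} (hx : WeaklyNullSeq x) :
    (0 : X) ∈ closure (convexHull ℝ (range x)) := by
  by_contra h0
  obtain ⟨f, c, hf0, hfc⟩ := geometric_hahn_banach_point_closed
    (convex_convexHull ℝ _).closure isClosed_closure h0
  rw [map_zero] at hf0
  obtain ⟨i, hi⟩ := ((hx f).eventually_lt_const hf0).exists
  exact hi.not_gt (hfc _ (subset_closure (subset_convexHull ℝ _ (mem_range_self i))))

theorem exists_strictMono_forall_dist_lt {E : Type*} [PseudoMetricSpace E] [ProperSpace E]
    {u : ℕ → E} (hu : Bornology.IsBounded (range u)) {δ : ℝ} (hδ : 0 < δ) :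
    ∃ φ : ℕ → ℕ, StrictMono φ ∧ ∀ k, dist (u (φ k)) (u (φ 0)) < δ := by
  obtain ⟨a, -, ψ, hψ, hlim⟩ := tendsto_subseq_of_bounded hu (mem_range_self (f := u))
  obtain ⟨K, hK⟩ := Metric.cauchySeq_iff'.1 hlim.cauchySeq δ hδ
  exact ⟨fun k => ψ (k + K), hψ.comp (strictMono_id.add_const K),
    fun k => by simpa using hK (k + K) (Nat.le_add_left K k)⟩

theorem exists_mem_convexHull_norm_lt {Z X Y : Type*} [NormedAddCommGroup Z] [NormedSpace ℝ Z]
    [NormedAddCommGroup X] [NormedSpace ℝ X] [NormedAddCommGroup Y] [NormedSpace ℝ Y]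
    [FiniteDimensional ℝ Y] (Q : Z →L[ℝ] X) (T : Z →L[ℝ] Y) {z : ℕ → Z}
    (hz : Bornology.IsBounded (range z)) (hQz : WeaklyNullSeq (Q ∘ z)) {δ : ℝ} (hδ : 0 < δ) :
    ∃ N, ∃ y ∈ convexHull ℝ (range z), ‖Q y‖ < δ ∧ ‖T y - T (z N)‖ < δ := by
  have hTz : Bornology.IsBounded (range (T ∘ z)) := by
    rw [range_comp]
    exact T.lipschitz.isBounded_image hz
  obtain ⟨φ, hφ, hclose⟩ := exists_strictMono_forall_dist_lt hTz hδ
  have hzero := (hQz.comp_strictMono hφ).zero_mem_closure_convexHull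
  rw [Function.comp_assoc, range_comp, ← Q.coe_coe, ← LinearMap.image_convexHull] at hzero
  obtain ⟨_, ⟨y, hy, rfl⟩, hQy⟩ := Metric.mem_closure_iff.1 hzero δ hδ
  have hsub : convexHull ℝ (range (z ∘ φ)) ⊆ T ⁻¹' Metric.ball (T (z (φ 0))) δ :=
    convexHull_min (range_subset_iff.2 hclose)
      ((convex_ball _ _).linear_preimage T.toLinearMap)
  refine ⟨φ 0, y, convexHull_mono (range_comp_subset_range φ z) hy, ?_, ?_⟩
  · simpa using hQy
  · simpa [dist_eq_norm] using hsub hy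

namespace FDD

variable {Z : Type*} [NormedAddCommGroup Z] [NormedSpace ℝ Z]

theorem proj_apply (F : FDD Z) (s : Finset ℕ) (z : Z) : F.proj s z = ∑ i ∈ s, F.P i z :=
  sum_apply _ _ _

theorem P_apply_P (F : FDD Z) (i j : ℕ) (z : Z) :
    F.P i (F.P j z) = if i = j then F.P j z else 0 := by
  have hsum : Tendsto (fun m => ∑ i ∈ Finset.range m, if i = j then F.P j z else 0) atTop
      (𝓝 (F.P j z)) :=
    tendsto_atTop_of_eventually_const (i₀ := j + 1) fun m hm => by simp; omega
  exact (F.unique _ _ (fun i => by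
    split_ifs with h
    · exact h ▸ F.mem_E j z
    · exact zero_mem _) hsum i).symm

theorem proj_proj (F : FDD Z) (s : Finset ℕ) (z : Z) : F.proj s (F.proj s z) = F.proj s z := by
  simp only [proj_apply, map_sum, P_apply_P]
  exact Finset.sum_congr rfl fun i hi => by simp [hi]

theorem proj_mem_finset_sup (F : FDD Z) (s : Finset ℕ) (z : Z) : F.proj s z ∈ s.sup F.E := by
  rw [proj_apply]
  exact Submodule.sum_mem _ fun i hi => Finset.le_sup (f := F.E) hi (F.mem_E i z)

/-- The tail projection `I - P_{[0,n)}` is the limit of the interval projections `P_{[n,m]}`. -/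
theorem Bimonotone.norm_sub_proj_range_le {F : FDD Z} (hF : F.Bimonotone) (n : ℕ) (z : Z) :
    ‖z - F.proj (Finset.range n) z‖ ≤ ‖z‖ := by
  have hlim : Tendsto (fun m => ∑ i ∈ Finset.range (m + 1), F.P i z - F.proj (Finset.range n) z)
      atTop (𝓝 (z - F.proj (Finset.range n) z)) :=
    ((F.sum_eq z).comp (tendsto_add_atTop_nat 1)).sub_const _
  refine le_of_tendsto hlim.norm (eventually_ge_atTop n |>.mono fun m hm => ?_)
  rw [proj_apply, ← Finset.sum_range_add_sum_Ico _ (by omega : n ≤ m + 1), add_sub_cancel_left,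
    Finset.Ico_add_one_right_eq_Icc, ← proj_apply]
  exact hF n m z

end FDD

/-- `P^F_{[1,n]}` of the paper is `F.proj (Finset.range n)` here. -/
theorem quotient_lift_weakly_null_general
    {X : Type*} [NormedAddCommGroup X] [NormedSpace ℝ X]
    {Z : Type*} [NormedAddCommGroup Z] [NormedSpace ℝ Z]
    (F : FDD Z) (hbm : F.Bimonotone)
    (Q : Z →L[ℝ] X)
    (C : ℝ)
    (hball : ∀ x : X, ‖x‖ ≤ 1 → ∃ z : Z, ‖z‖ ≤ C ∧ Q z = x)
    (x : ℕ → X) (hx1 : ∀ i, ‖x i‖ = 1) (hxw : WeaklyNullSeq x) :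
    ∀ ε : ℝ, 0 < ε → ∀ n : ℕ, ∃ (N : ℕ) (z : Z),
      ‖z‖ ≤ 2*C ∧ F.proj (Finset.range n) z = 0 ∧ ‖Q z - x N‖ < ε := by
  intro ε hε n
  choose lift hlift_norm hlift using fun i => hball (x i) (hx1 i).le
  set P := F.proj (Finset.range n)
  set δ := ε / (1 + ‖Q‖)
  have : ∀ i, FiniteDimensional ℝ (F.E i) := F.finDim
  have hbdd : Bornology.IsBounded (range lift) :=
    isBounded_iff_forall_norm_le.2 ⟨C, forall_mem_range.2 hlift_norm⟩
  have hQlift : ⇑Q ∘ lift = x := funext hlift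
  obtain ⟨N, y, hy, hQy, hPy⟩ := exists_mem_convexHull_norm_lt Q
    (P.codRestrict _ (F.proj_mem_finset_sup _)) hbdd (hQlift ▸ hxw) (by positivity : 0 < δ)
  replace hPy : ‖P y - P (lift N)‖ < δ := hPy
  have hy_norm : ‖y‖ ≤ C := by
    simpa using convexHull_min (range_subset_iff.2 fun i => by simpa using hlift_norm i)
      (convex_closedBall (0 : Z) C) hy
  refine ⟨N, (lift N - y) - P (lift N - y), ?_, by rw [map_sub, F.proj_proj, sub_self], ?_⟩
  · calc _ ≤ ‖lift N - y‖ := hbm.norm_sub_proj_range_le n _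
      _ ≤ 2 * C := by linarith [norm_sub_le (lift N) y, hlift_norm N]
  · calc ‖Q ((lift N - y) - P (lift N - y)) - x N‖ = ‖-Q y + Q (P y - P (lift N))‖ := by
          simp only [map_sub, hlift]; abel_nf
      _ ≤ ‖Q y‖ + ‖Q‖ * ‖P y - P (lift N)‖ := (norm_add_le _ _).trans
          (by rw [norm_neg]; gcongr; exact Q.le_opNorm _)
      _ < δ + ‖Q‖ * δ := add_lt_add_of_lt_of_le hQy (by gcongr)
      _ = ε := by simp only [δ]; field_simp

/-- Lemma 3.3: lifting a weakly null sequence through a quotient map, up to `ε` and with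
a lift vanishing on the first coordinates of the FDD (here the first `n` coordinates,
i.e. the paper's `P_{[1,n]}` is the projection onto `Finset.range n`). -/
theorem quotient_lift_weakly_null
    {X : Type*} [NormedAddCommGroup X] [NormedSpace ℝ X] [CompleteSpace X]
    {Z : Type*} [NormedAddCommGroup Z] [NormedSpace ℝ Z] [CompleteSpace Z]
    (F : FDD Z) (hbm : F.Bimonotone)
    (Q : Z →L[ℝ] X) (hQ : Function.Surjective Q)
    (C : ℝ) (hC : 0 < C)
    (hball : ∀ x : X, ‖x‖ ≤ 1 → ∃ z : Z, ‖z‖ ≤ C ∧ Q z = x)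
    (x : ℕ → X) (hx1 : ∀ i, ‖x i‖ = 1) (hxw : WeaklyNullSeq x) :
    ∀ ε : ℝ, 0 < ε → ∀ n : ℕ, ∃ (N : ℕ) (z : Z),
      ‖z‖ ≤ 2*C ∧ F.proj (Finset.range n) z = 0 ∧ ‖Q z - x N‖ < ε :=
  quotient_lift_weakly_null_general F hbm Q C hball x hx1 hxw
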